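/- Let S be a Boolean inverse semigroup and X ⊆ S. Then (SXS)^∨, the closure under finite compatible joins of the semigroup ideal generated by X, is the smallest additive ideal of S containing X. -/

import Mathlib

/-- An inverse semigroup with zero: associative multiplication, unique
generalized inverses, and a multiplicatively absorbing zero. -/
structure InvSemigroupZero (S : Type*) [Mul S] [Inv S] [Zero S] : Prop where
  mul_assoc : ∀ a b c : S, a * b * c = a * (b * c)
  mul_inv_mul : ∀ a : S, a * a⁻¹ * a = a
  inv_mul_inv : ∀ a : S, a⁻¹ * a * a⁻¹ = a⁻¹
  inv_unique : ∀ a t : S, a * t * a = a → t * a * t = t → t = a⁻¹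
  zero_mul : ∀ a : S, 0 * a = 0
  mul_zero : ∀ a : S, a * 0 = 0

def IsIdem {S : Type*} [Mul S] (e : S) : Prop := e * e = e

/-- The natural partial order: `s ≤ t` iff `s = t e` for some idempotent `e`. -/
def natLe {S : Type*} [Mul S] (s t : S) : Prop := ∃ e : S, IsIdem e ∧ s = t * e

/-- `s` and `t` are compatible iff `s⁻¹ t` and `s t⁻¹` are idempotents. -/
def Compat {S : Type*} [Mul S] [Inv S] (s t : S) : Prop :=
  IsIdem (s⁻¹ * t) ∧ IsIdem (s * t⁻¹)

/-- A Boolean inverse semigroup: an inverse semigroup with zero in which `⊔`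
gives the join of any compatible pair, multiplication distributes over such
joins, and `\` gives relative complements (so the idempotents form a
generalized Boolean algebra). -/
structure BooleanInvSemigroup (S : Type*) [Mul S] [Inv S] [Zero S] [Max S] [SDiff S] :
    Prop where
  toInvSemigroupZero : InvSemigroupZero S
  le_sup_left : ∀ a b : S, Compat a b → natLe a (a ⊔ b)
  le_sup_right : ∀ a b : S, Compat a b → natLe b (a ⊔ b)
  sup_le : ∀ a b c : S, Compat a b → natLe a c → natLe b c → natLe (a ⊔ b) c
  mul_sup : ∀ a b c : S, Compat b c → a * (b ⊔ c) = (a * b) ⊔ (a * c)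
  sup_mul : ∀ a b c : S, Compat a b → (a ⊔ b) * c = (a * c) ⊔ (b * c)
  sdiff_le : ∀ a c : S, natLe c a → natLe (a \ c) a
  sdiff_orth : ∀ a c : S, natLe c a → c⁻¹ * (a \ c) = 0 ∧ c * (a \ c)⁻¹ = 0
  sup_sdiff : ∀ a c : S, natLe c a → c ⊔ (a \ c) = a

def dd {S : Type*} [Mul S] [Inv S] (a : S) : S := a⁻¹ * a
def rr {S : Type*} [Mul S] [Inv S] (a : S) : S := a * a⁻¹

/-- The (left) skew difference `a ⊖ b = f a e` where `e = d(a) \ d(a)d(b)` and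
`f = r(b) \ r(a)r(b)`. -/
def skewDiff {S : Type*} [Mul S] [Inv S] [SDiff S] (a b : S) : S :=
  (rr b \ (rr a * rr b)) * a * (dd a \ (dd a * dd b))

/-- The (left) skew join `a ▽ b = (a ⊖ b) ∨ b`. -/
def skewJoin {S : Type*} [Mul S] [Inv S] [SDiff S] [Max S] (a b : S) : S :=
  skewDiff a b ⊔ b

/-- An additive ideal: a two-sided semigroup ideal closed under binary
compatible joins. -/
def AddIdeal {S : Type*} [Mul S] [Inv S] [Max S] (I : Set S) : Prop :=
  (∀ a ∈ I, ∀ s : S, s * a ∈ I ∧ a * s ∈ I) ∧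
    ∀ a ∈ I, ∀ b ∈ I, Compat a b → a ⊔ b ∈ I

/-- The semigroup ideal `SXS` generated by `X`. -/
def sandwich {S : Type*} [Mul S] (X : Set S) : Set S :=
  {y | ∃ s x t : S, x ∈ X ∧ y = s * x * t}

/-- `Y^∨`: the set of joins of finite nonempty compatible subsets of `Y`. -/
def joinClosure {S : Type*} [Mul S] [Inv S] (Y : Set S) : Set S :=
  {a | ∃ F : Finset S, F.Nonempty ∧ ↑F ⊆ Y ∧ (∀ x ∈ F, ∀ y ∈ F, Compat x y) ∧
        (∀ x ∈ F, natLe x a) ∧ ∀ c : S, (∀ x ∈ F, natLe x c) → natLe a c}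

/-! Idempotents of an inverse semigroup commute, so the natural order is a partial order
compatible with multiplication, and elements with a common upper bound are compatible. Hence the
join of a finite nonempty set is an iterated binary compatible join of its elements. Multiplication
distributes over these, so translating the set by `s` translates its join, and the join lies in
every set that contains the elements and is closed under compatible binary joins. -/

namespace InvSemigroupZero

variable {S : Type*} [Mul S] [Inv S] [Zero S]

theorem inv_inv (h : InvSemigroupZero S) (a : S) : a⁻¹⁻¹ = a :=
  (h.inv_unique a⁻¹ a (h.inv_mul_inv a) (h.mul_inv_mul a)).symm

theorem inv_eq_self_of_isIdem (h : InvSemigroupZero S) {e : S} (he : IsIdem e) : e⁻¹ = e :=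
  (h.inv_unique e e (by rw [he, he]) (by rw [he, he])).symm

theorem isIdem_inv_mul_self (h : InvSemigroupZero S) (a : S) : IsIdem (a⁻¹ * a) := by
  rw [IsIdem, ← h.mul_assoc, h.inv_mul_inv]

theorem isIdem_mul_inv_self (h : InvSemigroupZero S) (a : S) : IsIdem (a * a⁻¹) := by
  rw [IsIdem, ← h.mul_assoc, h.mul_inv_mul]

/-- With `g = (ef)⁻¹`, the element `fge` is also an inverse of `ef`, so `g = fge`; this makes
`g`, and hence `ef = g⁻¹`, idempotent. -/
theorem isIdem_mul (h : InvSemigroupZero S) {e f : S} (he : IsIdem e) (hf : IsIdem f) :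
    IsIdem (e * f) := by
  set g := (e * f)⁻¹ with hg
  have hgefg : g * (e * f) * g = g := h.inv_mul_inv (e * f)
  have hfge : f * g * e = g := by
    refine h.inv_unique (e * f) (f * g * e) ?_ ?_
    · calc e * f * (f * g * e) * (e * f) = e * (f * f) * g * (e * e) * f := by
            simp only [h.mul_assoc]
        _ = e * f * g * (e * f) := by rw [he, hf]; simp only [h.mul_assoc]
        _ = e * f := h.mul_inv_mul (e * f)
    · calc f * g * e * (e * f) * (f * g * e) = f * (g * (e * e * (f * f)) * g) * e := by
            simp only [h.mul_assoc]
        _ = f * g * e := by rw [he, hf, hgefg, h.mul_assoc]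
  have hg_idem : IsIdem g := by
    calc g * g = f * (g * (e * f) * g) * e := by
          conv_lhs => rw [← hfge]
          simp only [h.mul_assoc]
      _ = g := by rw [hgefg, hfge]
  rwa [← h.inv_inv (e * f), ← hg, h.inv_eq_self_of_isIdem hg_idem]

/-- `fe` is an inverse of the idempotent `ef`, which is its own inverse. -/
theorem mul_comm_of_isIdem (h : InvSemigroupZero S) {e f : S} (he : IsIdem e) (hf : IsIdem f) :
    e * f = f * e := by
  have hef := h.isIdem_mul he hf
  have hfe := h.isIdem_mul hf he
  have hinv : f * e = (e * f)⁻¹ := by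
    refine h.inv_unique (e * f) (f * e) ?_ ?_
    · calc e * f * (f * e) * (e * f) = e * (f * f) * (e * e) * f := by simp only [h.mul_assoc]
        _ = e * f * (e * f) := by rw [he, hf]; simp only [h.mul_assoc]
        _ = e * f := hef
    · calc f * e * (e * f) * (f * e) = f * (e * e) * (f * f) * e := by simp only [h.mul_assoc]
        _ = f * e * (f * e) := by rw [he, hf]; simp only [h.mul_assoc]
        _ = f * e := hfe
  rw [hinv, h.inv_eq_self_of_isIdem hef]

theorem mul_inv_rev (h : InvSemigroupZero S) (a b : S) : (a * b)⁻¹ = b⁻¹ * a⁻¹ := by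
  have hcomm := h.mul_comm_of_isIdem (h.isIdem_inv_mul_self a) (h.isIdem_mul_inv_self b)
  refine (h.inv_unique (a * b) (b⁻¹ * a⁻¹) ?_ ?_).symm
  · calc a * b * (b⁻¹ * a⁻¹) * (a * b) = a * ((b * b⁻¹) * (a⁻¹ * a)) * b := by
          simp only [h.mul_assoc]
      _ = a * a⁻¹ * a * (b * b⁻¹ * b) := by rw [← hcomm]; simp only [h.mul_assoc]
      _ = a * b := by rw [h.mul_inv_mul, h.mul_inv_mul]
  · calc b⁻¹ * a⁻¹ * (a * b) * (b⁻¹ * a⁻¹) = b⁻¹ * ((a⁻¹ * a) * (b * b⁻¹)) * a⁻¹ := by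
          simp only [h.mul_assoc]
      _ = b⁻¹ * b * b⁻¹ * (a⁻¹ * a * a⁻¹) := by rw [hcomm]; simp only [h.mul_assoc]
      _ = b⁻¹ * a⁻¹ := by rw [h.inv_mul_inv, h.inv_mul_inv]

theorem isIdem_conj (h : InvSemigroupZero S) (s : S) {e : S} (he : IsIdem e) :
    IsIdem (s * e * s⁻¹) := by
  have hcomm := h.mul_comm_of_isIdem he (h.isIdem_inv_mul_self s)
  calc s * e * s⁻¹ * (s * e * s⁻¹) = s * (e * (s⁻¹ * s)) * e * s⁻¹ := by
        simp only [h.mul_assoc]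
    _ = s * e * s⁻¹ := by
        rw [hcomm]; simp only [← h.mul_assoc]; rw [h.mul_inv_mul, h.mul_assoc s, he]

theorem isIdem_inv_conj (h : InvSemigroupZero S) (s : S) {e : S} (he : IsIdem e) :
    IsIdem (s⁻¹ * e * s) := by
  simpa only [h.inv_inv] using h.isIdem_conj s⁻¹ he

theorem natLe_refl (h : InvSemigroupZero S) (a : S) : natLe a a :=
  ⟨a⁻¹ * a, h.isIdem_inv_mul_self a, by rw [← h.mul_assoc, h.mul_inv_mul]⟩

theorem natLe_trans (h : InvSemigroupZero S) {s t u : S} (hst : natLe s t) (htu : natLe t u) :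
    natLe s u := by
  obtain ⟨e, he, rfl⟩ := hst
  obtain ⟨f, hf, rfl⟩ := htu
  exact ⟨f * e, h.isIdem_mul hf he, h.mul_assoc u f e⟩

theorem natLe_antisymm (h : InvSemigroupZero S) {s t : S} (hst : natLe s t) (hts : natLe t s) :
    s = t := by
  obtain ⟨e, he, rfl⟩ := hst
  obtain ⟨f, hf, ht⟩ := hts
  calc t * e = t * e * f * e := by rw [← ht]
    _ = t * (e * e) * f := by
        rw [h.mul_assoc _ f, h.mul_comm_of_isIdem hf he]; simp only [h.mul_assoc]
    _ = t := by rw [he, ← ht]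

theorem natLe_mul_left (h : InvSemigroupZero S) (u : S) {s t : S} (hst : natLe s t) :
    natLe (u * s) (u * t) := by
  obtain ⟨e, he, rfl⟩ := hst
  exact ⟨e, he, (h.mul_assoc u t e).symm⟩

/-- `te u = tu (u⁻¹eu)`, because `e` commutes with `uu⁻¹`. -/
theorem natLe_mul_right (h : InvSemigroupZero S) (u : S) {s t : S} (hst : natLe s t) :
    natLe (s * u) (t * u) := by
  obtain ⟨e, he, rfl⟩ := hst
  refine ⟨u⁻¹ * e * u, h.isIdem_inv_conj u he, ?_⟩
  calc t * e * u = t * (e * (u * u⁻¹)) * u := by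
        simp only [h.mul_assoc]; rw [← h.mul_assoc u, h.mul_inv_mul]
    _ = t * u * (u⁻¹ * e * u) := by
        rw [h.mul_comm_of_isIdem he (h.isIdem_mul_inv_self u)]; simp only [h.mul_assoc]

theorem compat_of_natLe (h : InvSemigroupZero S) {u v c : S} (hu : natLe u c) (hv : natLe v c) :
    Compat u v := by
  obtain ⟨e, he, rfl⟩ := hu
  obtain ⟨f, hf, rfl⟩ := hv
  constructor
  · have hprod : (c * e)⁻¹ * (c * f) = e * (c⁻¹ * c) * f := by
      rw [h.mul_inv_rev, h.inv_eq_self_of_isIdem he]; simp only [h.mul_assoc]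
    rw [hprod]
    exact h.isIdem_mul (h.isIdem_mul he (h.isIdem_inv_mul_self c)) hf
  · have hprod : c * e * (c * f)⁻¹ = c * (e * f) * c⁻¹ := by
      rw [h.mul_inv_rev, h.inv_eq_self_of_isIdem hf]; simp only [h.mul_assoc]
    rw [hprod]
    exact h.isIdem_conj c (h.isIdem_mul he hf)

theorem subset_sandwich (h : InvSemigroupZero S) (X : Set S) : X ⊆ sandwich X := fun x hx =>
  ⟨x * x⁻¹, x, x⁻¹ * x, hx, by rw [h.mul_inv_mul, ← h.mul_assoc, h.mul_inv_mul]⟩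

theorem mapsTo_mul_left_sandwich (h : InvSemigroupZero S) (X : Set S) (s : S) :
    Set.MapsTo (s * ·) (sandwich X) (sandwich X) := by
  rintro _ ⟨u, x, v, hx, rfl⟩
  exact ⟨s * u, x, v, hx, by simp only [h.mul_assoc]⟩

theorem mapsTo_mul_right_sandwich (h : InvSemigroupZero S) (X : Set S) (s : S) :
    Set.MapsTo (· * s) (sandwich X) (sandwich X) := by
  rintro _ ⟨u, x, v, hx, rfl⟩
  exact ⟨u, x, v * s, hx, by simp only [h.mul_assoc]⟩

end InvSemigroupZero

theorem sandwich_subset {S : Type*} [Mul S] {X I : Set S}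
    (hI : ∀ a ∈ I, ∀ s : S, s * a ∈ I ∧ a * s ∈ I) (hXI : X ⊆ I) : sandwich X ⊆ I := by
  rintro _ ⟨u, x, v, hx, rfl⟩
  exact (hI _ (hI x (hXI hx) u).1 v).2

def IsJoin {S : Type*} [Mul S] (F : Finset S) (a : S) : Prop :=
  (∀ x ∈ F, natLe x a) ∧ ∀ c : S, (∀ x ∈ F, natLe x c) → natLe a c

section IsJoin

variable {S : Type*} [Mul S] [Inv S] [Zero S]

theorem IsJoin.singleton (h : InvSemigroupZero S) (x : S) : IsJoin {x} x :=
  ⟨fun _ hy => Finset.mem_singleton.mp hy ▸ h.natLe_refl x,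
    fun _ hc => hc x (Finset.mem_singleton_self x)⟩

theorem IsJoin.unique (h : InvSemigroupZero S) {F : Finset S} {a b : S} (ha : IsJoin F a)
    (hb : IsJoin F b) : a = b :=
  h.natLe_antisymm (ha.2 b hb.1) (hb.2 a ha.1)

theorem mem_joinClosure_iff (h : InvSemigroupZero S) {Y : Set S} {a : S} :
    a ∈ joinClosure Y ↔ ∃ F : Finset S, F.Nonempty ∧ ↑F ⊆ Y ∧ IsJoin F a :=
  ⟨fun ⟨F, hF, hFY, _, ha⟩ => ⟨F, hF, hFY, ha⟩, fun ⟨F, hF, hFY, ha⟩ =>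
    ⟨F, hF, hFY, fun x hx y hy => h.compat_of_natLe (ha.1 x hx) (ha.1 y hy), ha⟩⟩

theorem subset_joinClosure (h : InvSemigroupZero S) (Y : Set S) : Y ⊆ joinClosure Y :=
  fun x hx =>
  (mem_joinClosure_iff h).2 ⟨{x}, Finset.singleton_nonempty x,
    by rwa [Finset.coe_singleton, Set.singleton_subset_iff], IsJoin.singleton h x⟩

end IsJoin

section BooleanInvSemigroup

variable {S : Type*} [Mul S] [Inv S] [Zero S] [Max S] [SDiff S]

theorem IsJoin.union [DecidableEq S] (hS : BooleanInvSemigroup S) {F G : Finset S} {a b : S}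
    (ha : IsJoin F a) (hb : IsJoin G b) (hab : Compat a b) : IsJoin (F ∪ G) (a ⊔ b) := by
  have h := hS.toInvSemigroupZero
  refine ⟨fun x hx => ?_, fun c hc => ?_⟩
  · rcases Finset.mem_union.mp hx with hx | hx
    · exact h.natLe_trans (ha.1 x hx) (hS.le_sup_left a b hab)
    · exact h.natLe_trans (hb.1 x hx) (hS.le_sup_right a b hab)
  · exact hS.sup_le a b c hab (ha.2 c fun x hx => hc x (Finset.mem_union_left G hx))
      (hb.2 c fun x hx => hc x (Finset.mem_union_right F hx))

theorem IsJoin.exists_of_natLe (hS : BooleanInvSemigroup S) {F : Finset S} (hF : F.Nonempty)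
    {c : S} (hc : ∀ x ∈ F, natLe x c) : ∃ a, IsJoin F a ∧ natLe a c := by
  classical
  have h := hS.toInvSemigroupZero
  induction hF using Finset.Nonempty.cons_induction with
  | singleton x => exact ⟨x, IsJoin.singleton h x, hc x (Finset.mem_singleton_self x)⟩
  | cons x F _ hF ih =>
    simp only [Finset.cons_eq_insert, Finset.mem_insert, forall_eq_or_imp] at hc
    obtain ⟨a, ha, hac⟩ := ih hc.2
    have hxa := h.compat_of_natLe hc.1 hac
    rw [Finset.cons_eq_insert, Finset.insert_eq]
    exact ⟨x ⊔ a, (IsJoin.singleton h x).union hS ha hxa, hS.sup_le x a c hxa hc.1 hac⟩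

theorem IsJoin.eq_sup_of_singleton_union [DecidableEq S] (hS : BooleanInvSemigroup S)
    {F : Finset S} (hF : F.Nonempty) {x a : S} (ha : IsJoin ({x} ∪ F) a) :
    ∃ b, IsJoin F b ∧ Compat x b ∧ a = x ⊔ b := by
  have h := hS.toInvSemigroupZero
  obtain ⟨b, hb, hba⟩ :=
    IsJoin.exists_of_natLe hS hF fun y hy => ha.1 y (Finset.mem_union_right _ hy)
  have hxb := h.compat_of_natLe (ha.1 x (Finset.mem_union_left _ (Finset.mem_singleton_self x))) hba
  exact ⟨b, hb, hxb, ha.unique h ((IsJoin.singleton h x).union hS hb hxb)⟩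

theorem IsJoin.image [DecidableEq S] (hS : BooleanInvSemigroup S) {φ : S → S}
    (hmono : ∀ {s t}, natLe s t → natLe (φ s) (φ t))
    (hsup : ∀ s t, Compat s t → φ (s ⊔ t) = φ s ⊔ φ t) {F : Finset S} (hF : F.Nonempty) {a : S}
    (ha : IsJoin F a) : IsJoin (F.image φ) (φ a) := by
  have h := hS.toInvSemigroupZero
  induction hF using Finset.Nonempty.cons_induction generalizing a with
  | singleton x =>
    rw [ha.unique h (IsJoin.singleton h x), Finset.image_singleton]
    exact IsJoin.singleton h (φ x)
  | cons x F _ hF ih =>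
    rw [Finset.cons_eq_insert, Finset.insert_eq] at ha ⊢
    obtain ⟨b, hb, hxb, rfl⟩ := IsJoin.eq_sup_of_singleton_union hS hF ha
    rw [hsup x b hxb, Finset.image_union, Finset.image_singleton]
    exact (IsJoin.singleton h (φ x)).union hS (ih hb) (h.compat_of_natLe
      (hmono (hS.le_sup_left x b hxb)) (hmono (hS.le_sup_right x b hxb)))

theorem IsJoin.mem [DecidableEq S] (hS : BooleanInvSemigroup S) {I : Set S}
    (hI : ∀ a ∈ I, ∀ b ∈ I, Compat a b → a ⊔ b ∈ I) {F : Finset S} (hF : F.Nonempty)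
    (hFI : ↑F ⊆ I) {a : S} (ha : IsJoin F a) : a ∈ I := by
  have h := hS.toInvSemigroupZero
  induction hF using Finset.Nonempty.cons_induction generalizing a with
  | singleton x =>
    rw [ha.unique h (IsJoin.singleton h x)]
    exact hFI (Finset.mem_singleton_self x)
  | cons x F _ hF ih =>
    rw [Finset.cons_eq_insert, Finset.insert_eq] at ha hFI
    obtain ⟨b, hb, hxb, rfl⟩ := IsJoin.eq_sup_of_singleton_union hS hF ha
    rw [Finset.coe_union, Finset.coe_singleton, Set.union_subset_iff,
      Set.singleton_subset_iff] at hFI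
    exact hI x hFI.1 b (ih hFI.2 hb) hxb

theorem sup_mem_joinClosure (hS : BooleanInvSemigroup S) {Y : Set S} {a b : S}
    (ha : a ∈ joinClosure Y) (hb : b ∈ joinClosure Y) (hab : Compat a b) :
    a ⊔ b ∈ joinClosure Y := by
  classical
  have h := hS.toInvSemigroupZero
  obtain ⟨F, hF, hFY, haF⟩ := (mem_joinClosure_iff h).1 ha
  obtain ⟨G, -, hGY, hbG⟩ := (mem_joinClosure_iff h).1 hb
  refine (mem_joinClosure_iff h).2 ⟨F ∪ G, hF.mono Finset.subset_union_left, ?_,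
    haF.union hS hbG hab⟩
  rw [Finset.coe_union]
  exact Set.union_subset hFY hGY

theorem mapsTo_joinClosure (hS : BooleanInvSemigroup S) {φ : S → S}
    (hmono : ∀ {s t}, natLe s t → natLe (φ s) (φ t))
    (hsup : ∀ s t, Compat s t → φ (s ⊔ t) = φ s ⊔ φ t) {Y : Set S} (hY : Set.MapsTo φ Y Y) :
    Set.MapsTo φ (joinClosure Y) (joinClosure Y) := by
  classical
  have h := hS.toInvSemigroupZero
  intro a ha
  obtain ⟨F, hF, hFY, haF⟩ := (mem_joinClosure_iff h).1 ha
  refine (mem_joinClosure_iff h).2 ⟨F.image φ, hF.image φ, ?_, haF.image hS hmono hsup hF⟩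
  rw [Finset.coe_image]
  exact (Set.image_mono hFY).trans hY.image_subset

theorem joinClosure_subset (hS : BooleanInvSemigroup S) {Y I : Set S}
    (hI : ∀ a ∈ I, ∀ b ∈ I, Compat a b → a ⊔ b ∈ I) (hYI : Y ⊆ I) : joinClosure Y ⊆ I := by
  classical
  intro a ha
  obtain ⟨F, hF, hFY, haF⟩ := (mem_joinClosure_iff hS.toInvSemigroupZero).1 ha
  exact haF.mem hS hI hF (hFY.trans hYI)

end BooleanInvSemigroup

/-- `(SXS)^∨` is the smallest additive ideal of `S` containing `X`. -/
theorem joinClosure_sandwich_smallest_additive_ideal {S : Type*}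
    [Mul S] [Inv S] [Zero S] [Max S] [SDiff S]
    (hS : BooleanInvSemigroup S) (X : Set S) :
    AddIdeal (joinClosure (sandwich X)) ∧ X ⊆ joinClosure (sandwich X) ∧
      ∀ I : Set S, AddIdeal I → X ⊆ I → joinClosure (sandwich X) ⊆ I := by
  have h := hS.toInvSemigroupZero
  refine ⟨⟨fun a ha s => ⟨?_, ?_⟩, fun a ha b hb => sup_mem_joinClosure hS ha hb⟩,
    (h.subset_sandwich X).trans (subset_joinClosure h _),
    fun I hI hXI => joinClosure_subset hS hI.2 (sandwich_subset hI.1 hXI)⟩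
  · exact mapsTo_joinClosure hS (h.natLe_mul_left s) (hS.mul_sup s)
      (h.mapsTo_mul_left_sandwich X s) ha
  · exact mapsTo_joinClosure hS (h.natLe_mul_right s) (fun a b hab => hS.sup_mul a b s hab)
      (h.mapsTo_mul_right_sandwich X s) ha
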